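/- In LK(T)p, the identity rules are admissible: (Iden₁) for any P-positive literal l, the focused sequent Γ, l ⊢ [P] l is derivable; (Iden₂) for any literal l, the unfocused sequent Γ, l, ¬l ⊢ [P] (with empty right-hand side) is derivable. -/
import Mathlib


open scoped Classical

/-- Abstract structure of literals: an involutive negation (with `neg l ≠ l`),
substitution of terms for variables (commuting with negation), and free variables. -/
structure LitStr (V Tm Lit : Type) where
  neg : Lit → Lit
  neg_invol : ∀ l, neg (neg l) = l
  neg_ne : ∀ l, neg l ≠ l
  substL : Lit → V → Tm → Lit
  substL_neg : ∀ l x t, substL (neg l) x t = neg (substL l x t)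
  fvL : Lit → Set V

/-- Polarised formulae. -/
inductive PForm (V Lit : Type) where
  | lit (l : Lit)
  | andP (A B : PForm V Lit)
  | orP (A B : PForm V Lit)
  | exi (x : V) (A : PForm V Lit)
  | topP
  | botP
  | andN (A B : PForm V Lit)
  | orN (A B : PForm V Lit)
  | fa (x : V) (A : PForm V Lit)
  | topN
  | botN

namespace PForm

variable {V Tm Lit : Type}

/-- Negation of polarised formulae (De Morgan duality, swapping polarities). -/
def negF (S : LitStr V Tm Lit) : PForm V Lit → PForm V Lit
  | .lit l => .lit (S.neg l)
  | .andP A B => .orN (negF S A) (negF S B)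
  | .orP A B => .andN (negF S A) (negF S B)
  | .exi x A => .fa x (negF S A)
  | .topP => .botN
  | .botP => .topN
  | .andN A B => .orP (negF S A) (negF S B)
  | .orN A B => .andP (negF S A) (negF S B)
  | .fa x A => .exi x (negF S A)
  | .topN => .botP
  | .botN => .topP

/-- (Naive) substitution of a term for a variable in a formula. -/
noncomputable def substF (S : LitStr V Tm Lit) (x : V) (t : Tm) : PForm V Lit → PForm V Lit
  | .lit l => .lit (S.substL l x t)
  | .andP A B => .andP (substF S x t A) (substF S x t B)
  | .orP A B => .orP (substF S x t A) (substF S x t B)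
  | .exi y A => if y = x then .exi y A else .exi y (substF S x t A)
  | .topP => .topP
  | .botP => .botP
  | .andN A B => .andN (substF S x t A) (substF S x t B)
  | .orN A B => .orN (substF S x t A) (substF S x t B)
  | .fa y A => if y = x then .fa y A else .fa y (substF S x t A)
  | .topN => .topN
  | .botN => .botN

/-- Free variables of a formula. -/
def fvF (S : LitStr V Tm Lit) : PForm V Lit → Set V
  | .lit l => S.fvL l
  | .andP A B => fvF S A ∪ fvF S B
  | .orP A B => fvF S A ∪ fvF S B
  | .exi y A => fvF S A \ {y}
  | .topP => ∅
  | .botP => ∅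
  | .andN A B => fvF S A ∪ fvF S B
  | .orN A B => fvF S A ∪ fvF S B
  | .fa y A => fvF S A \ {y}
  | .topN => ∅
  | .botN => ∅

/-- `P`-positive formulae. -/
def IsPos (P : Set Lit) : PForm V Lit → Prop
  | .lit l => l ∈ P
  | .andP _ _ => True
  | .orP _ _ => True
  | .exi _ _ => True
  | .topP => True
  | .botP => True
  | _ => False

/-- `P`-negative formulae. -/
def IsNeg (S : LitStr V Tm Lit) (P : Set Lit) : PForm V Lit → Prop
  | .lit l => S.neg l ∈ P
  | .andN _ _ => True
  | .orN _ _ => True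
  | .fa _ _ => True
  | .topN => True
  | .botN => True
  | _ => False

/-- The formula is a literal. -/
def isLit : PForm V Lit → Prop := fun A => ∃ l, A = lit l

end PForm

variable {V Tm Lit : Type}

/-- Syntactical consistency of a set of literals. -/
def SynCons (S : LitStr V Tm Lit) (P : Set Lit) : Prop := ¬ ∃ l, l ∈ P ∧ S.neg l ∈ P

/-- `l` is `P`-unpolarised. -/
def UnpolLit (S : LitStr V Tm Lit) (P : Set Lit) (l : Lit) : Prop := l ∉ P ∧ S.neg l ∉ P

/-- `P⟨A⟩`: extend the polarisation set `P` with `A` when `A` is a `P`-unpolarised literal. -/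
def polar (S : LitStr V Tm Lit) (P : Set Lit) (A : PForm V Lit) : Set Lit :=
  P ∪ {m | A = PForm.lit m ∧ UnpolLit S P m}

/-- `Γ^P`: the `P`-positive literals occurring in `Γ` (as a set). -/
def posLits (P : Set Lit) (Γ : Multiset (PForm V Lit)) : Set Lit :=
  {l | l ∈ P ∧ PForm.lit l ∈ Γ}

/-- The literals occurring in `Γ` (as a set). -/
def litSet (Γ : Multiset (PForm V Lit)) : Set Lit := {l | PForm.lit l ∈ Γ}

/-- Negation of a multiset of formulae. -/
def negM (S : LitStr V Tm Lit) (Δ : Multiset (PForm V Lit)) : Multiset (PForm V Lit) :=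
  Δ.map (PForm.negF S)

/-- Free variables of a multiset of formulae. -/
def fvM (S : LitStr V Tm Lit) (Γ : Multiset (PForm V Lit)) : Set V :=
  {x | ∃ A ∈ Γ, x ∈ PForm.fvF S A}

/-- Free variables of a polarisation set. -/
def fvPol (S : LitStr V Tm Lit) (P : Set Lit) : Set V := {x | ∃ l ∈ P, x ∈ S.fvL l}

/-- An inconsistency predicate: basic inconsistency, upward closure (weakening),
cut-admissibility, and stability under instantiation. -/
structure InconsPred (S : LitStr V Tm Lit) (T : Set Lit → Prop) : Prop where
  basic : ∀ l : Lit, T {l, S.neg l}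
  mono : ∀ ⦃A B : Set Lit⦄, A ⊆ B → T A → T B
  cut : ∀ (A : Set Lit) (l : Lit), T (insert l A) → T (insert (S.neg l) A) → T A
  inst : ∀ (A : Set Lit) (x : V) (t : Tm), T A → T ((fun l => S.substL l x t) '' A)

/-- Syntactical inconsistency: the set contains some literal together with its negation. -/
def SynIncons (S : LitStr V Tm Lit) (A : Set Lit) : Prop := ∃ l, l ∈ A ∧ S.neg l ∈ A

mutual
  /-- Focused sequents `Γ ⊢ [P] A` of LK(T)p, with a height index. -/
  inductive DerPos (S : LitStr V Tm Lit) (T : Set Lit → Prop) :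
      Multiset (PForm V Lit) → Set Lit → PForm V Lit → ℕ → Prop where
    | andP {Γ P A B n m} : DerPos S T Γ P A n → DerPos S T Γ P B m →
        DerPos S T Γ P (.andP A B) (max n m + 1)
    | orP₁ {Γ P A B n} : DerPos S T Γ P A n → DerPos S T Γ P (.orP A B) (n + 1)
    | orP₂ {Γ P A B n} : DerPos S T Γ P B n → DerPos S T Γ P (.orP A B) (n + 1)
    | exi {Γ P x t A n} : DerPos S T Γ P (PForm.substF S x t A) n →
        DerPos S T Γ P (.exi x A) (n + 1)
    | topP {Γ P} : DerPos S T Γ P .topP 0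
    | init1 {Γ P l} : l ∈ P → T (posLits P Γ ∪ {S.neg l}) → DerPos S T Γ P (.lit l) 0
    | release {Γ P N n} : ¬ PForm.IsPos P N → DerNeg S T Γ P {N} n →
        DerPos S T Γ P N (n + 1)

  /-- Unfocused sequents `Γ ⊢ [P] Δ` of LK(T)p, with a height index. -/
  inductive DerNeg (S : LitStr V Tm Lit) (T : Set Lit → Prop) :
      Multiset (PForm V Lit) → Set Lit → Multiset (PForm V Lit) → ℕ → Prop where
    | andN {Γ P A B Δ n m} : DerNeg S T Γ P (A ::ₘ Δ) n → DerNeg S T Γ P (B ::ₘ Δ) m →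
        DerNeg S T Γ P (.andN A B ::ₘ Δ) (max n m + 1)
    | orN {Γ P A B Δ n} : DerNeg S T Γ P (A ::ₘ B ::ₘ Δ) n →
        DerNeg S T Γ P (.orN A B ::ₘ Δ) (n + 1)
    | fa {Γ P x A Δ n} : x ∉ fvM S Γ ∪ fvM S Δ ∪ fvPol S P →
        DerNeg S T Γ P (A ::ₘ Δ) n → DerNeg S T Γ P (.fa x A ::ₘ Δ) (n + 1)
    | botN {Γ P Δ n} : DerNeg S T Γ P Δ n → DerNeg S T Γ P (.botN ::ₘ Δ) (n + 1)
    | topN {Γ P Δ} : DerNeg S T Γ P (.topN ::ₘ Δ) 0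
    | store {Γ P A Δ n} : (PForm.isLit A ∨ PForm.IsPos P A) →
        DerNeg S T (PForm.negF S A ::ₘ Γ) (polar S P (PForm.negF S A)) Δ n →
        DerNeg S T Γ P (A ::ₘ Δ) (n + 1)
    | select {Γ P A n} : ¬ PForm.IsNeg S P A → PForm.negF S A ∈ Γ →
        DerPos S T Γ P A n → DerNeg S T Γ P 0 (n + 1)
    | init2 {Γ P} : T (posLits P Γ) → DerNeg S T Γ P 0 0
end

/-- Derivability of a focused sequent in LK(T)p. -/
def DerPosD (S : LitStr V Tm Lit) (T : Set Lit → Prop)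
    (Γ : Multiset (PForm V Lit)) (P : Set Lit) (A : PForm V Lit) : Prop :=
  ∃ n, DerPos S T Γ P A n

/-- Derivability of an unfocused sequent in LK(T)p. -/
def DerNegD (S : LitStr V Tm Lit) (T : Set Lit → Prop)
    (Γ : Multiset (PForm V Lit)) (P : Set Lit) (Δ : Multiset (PForm V Lit)) : Prop :=
  ∃ n, DerNeg S T Γ P Δ n

/-- Closure of a set of literals under all substitutions. -/
inductive ClSubst (S : LitStr V Tm Lit) (A : Set Lit) : Lit → Prop
  | base {l} : l ∈ A → ClSubst S A l
  | step {l} (x : V) (t : Tm) : ClSubst S A l → ClSubst S A (S.substL l x t)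

/-- Safety of a pair `(Γ, P)`. -/
def Safe (S : LitStr V Tm Lit) (T : Set Lit → Prop)
    (Γ : Multiset (PForm V Lit)) (P : Set Lit) : Prop :=
  ∀ Γ' : Multiset (PForm V Lit), Γ ≤ Γ' →
    ∀ R : Set Lit, ¬ T R →
      posLits P Γ' ⊆ R →
      R ⊆ posLits P Γ' ∪ {l | ClSubst S {m | UnpolLit S P m} l} →
      ∀ l ∈ P, T (R ∪ {S.neg l}) → T (posLits P Γ' ∪ {S.neg l})

/-- Free variables of an optional focus. -/
def fvO (S : LitStr V Tm Lit) : Option (PForm V Lit) → Set V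
  | none => ∅
  | some A => PForm.fvF S A

/-- Sequents `Γ ⊢ [P] X ; Δ` of the relaxed system LK(T)ex. -/
inductive DerEx (S : LitStr V Tm Lit) (T : Set Lit → Prop) :
    Multiset (PForm V Lit) → Set Lit → Option (PForm V Lit) → Multiset (PForm V Lit) → Prop where
  | andP {Γ P A B Δ} : DerEx S T Γ P (some A) Δ → DerEx S T Γ P (some B) Δ →
      DerEx S T Γ P (some (.andP A B)) Δ
  | orP₁ {Γ P A B Δ} : DerEx S T Γ P (some A) Δ → DerEx S T Γ P (some (.orP A B)) Δ
  | orP₂ {Γ P A B Δ} : DerEx S T Γ P (some B) Δ → DerEx S T Γ P (some (.orP A B)) Δ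
  | exi {Γ P x t A Δ} : DerEx S T Γ P (some (PForm.substF S x t A)) Δ →
      DerEx S T Γ P (some (.exi x A)) Δ
  | topP {Γ P Δ} : DerEx S T Γ P (some .topP) Δ
  | init1 {Γ P l Δ} : l ∈ P → T (posLits P Γ ∪ {S.neg l} ∪ litSet (negM S Δ)) →
      DerEx S T Γ P (some (.lit l)) Δ
  | release {Γ P N} : ¬ PForm.IsPos P N → DerEx S T Γ P none {N} →
      DerEx S T Γ P (some N) 0
  | andN {Γ P X A B Δ} : DerEx S T Γ P X (A ::ₘ Δ) → DerEx S T Γ P X (B ::ₘ Δ) →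
      DerEx S T Γ P X (.andN A B ::ₘ Δ)
  | orN {Γ P X A B Δ} : DerEx S T Γ P X (A ::ₘ B ::ₘ Δ) →
      DerEx S T Γ P X (.orN A B ::ₘ Δ)
  | fa {Γ P X x A Δ} : x ∉ fvM S Γ ∪ fvM S Δ ∪ fvPol S P ∪ fvO S X →
      DerEx S T Γ P X (A ::ₘ Δ) → DerEx S T Γ P X (.fa x A ::ₘ Δ)
  | botN {Γ P X Δ} : DerEx S T Γ P X Δ → DerEx S T Γ P X (.botN ::ₘ Δ)
  | topN {Γ P X Δ} : DerEx S T Γ P X (.topN ::ₘ Δ)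
  | store {Γ P X A Δ} : (PForm.isLit A ∨ PForm.IsPos P A) →
      DerEx S T (PForm.negF S A ::ₘ Γ) (polar S P (PForm.negF S A)) X Δ →
      DerEx S T Γ P X (A ::ₘ Δ)
  | select {Γ P A Δ} : ¬ PForm.IsNeg S P A → PForm.negF S A ∈ Γ →
      DerEx S T Γ P (some A) Δ → DerEx S T Γ P none Δ
  | init2 {Γ P Δ} : T (posLits P Γ ∪ litSet (negM S Δ)) → DerEx S T Γ P none Δ

/-- If a set contains a literal and its negation, it is `T`-inconsistent. -/
lemma T_of_pair {V Tm Lit : Type} {S : LitStr V Tm Lit} {T : Set Lit → Prop}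
    (hT : InconsPred S T) {A : Set Lit} {l : Lit} (h1 : l ∈ A) (h2 : S.neg l ∈ A) : T A := by
  refine hT.mono (A := {l, S.neg l}) ?_ (hT.basic l)
  rintro x hx
  rcases hx with rfl | rfl <;> assumption

/-- The identity rules Iden₁ and Iden₂ are admissible in LK(T)p. -/
theorem identity_admissible {V Tm Lit : Type} (S : LitStr V Tm Lit)
    (T : Set Lit → Prop) (hT : InconsPred S T) :
    (∀ (Γ : Multiset (PForm V Lit)) (P : Set Lit) (l : Lit), l ∈ P →
        DerPosD S T (PForm.lit l ::ₘ Γ) P (PForm.lit l)) ∧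
    (∀ (Γ : Multiset (PForm V Lit)) (P : Set Lit) (l : Lit),
        DerNegD S T (PForm.lit l ::ₘ PForm.lit (S.neg l) ::ₘ Γ) P 0) := by
  have iden1 : ∀ (Γ : Multiset (PForm V Lit)) (P : Set Lit) (l : Lit), l ∈ P →
      DerPosD S T (PForm.lit l ::ₘ Γ) P (PForm.lit l) := by
    intro Γ P l hl
    refine ⟨0, DerPos.init1 hl ?_⟩
    exact T_of_pair hT (Set.mem_union_left _ ⟨hl, Multiset.mem_cons_self _ _⟩)
      (Set.mem_union_right _ rfl)
  refine ⟨iden1, ?_⟩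
  intro Γ P l
  set Γ' : Multiset (PForm V Lit) := PForm.lit l ::ₘ PForm.lit (S.neg l) ::ₘ Γ with hΓ'
  have hlmem : PForm.lit l ∈ Γ' := Multiset.mem_cons_self _ _
  have hnlmem : PForm.lit (S.neg l) ∈ Γ' :=
    Multiset.mem_cons_of_mem (Multiset.mem_cons_self _ _)
  by_cases hl : l ∈ P
  · by_cases hnl : S.neg l ∈ P
    · -- both polarised: init2
      refine ⟨0, DerNeg.init2 ?_⟩
      exact T_of_pair hT ⟨hl, hlmem⟩ ⟨hnl, hnlmem⟩
    · -- l positive: select lit l then init1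
      refine ⟨1, DerNeg.select (A := PForm.lit l) hnl hnlmem ?_⟩
      exact DerPos.init1 hl (T_of_pair hT (Set.mem_union_left _ ⟨hl, hlmem⟩)
        (Set.mem_union_right _ rfl))
  · by_cases hnl : S.neg l ∈ P
    · -- l ∉ P, neg l ∈ P: select lit (¬l)
      have hne : ¬ PForm.IsNeg S P (PForm.lit (S.neg l)) := by
        simpa [PForm.IsNeg, S.neg_invol] using hl
      refine ⟨1, DerNeg.select (A := PForm.lit (S.neg l)) hne ?_ ?_⟩
      · show PForm.lit (S.neg (S.neg l)) ∈ Γ'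
        rw [S.neg_invol]; exact hlmem
      · refine DerPos.init1 hnl ?_
        rw [S.neg_invol]
        exact T_of_pair hT (Set.mem_union_right _ rfl)
          (Set.mem_union_left _ ⟨hnl, hnlmem⟩)
    · -- both unpolarised
      have hunpol : UnpolLit S P (S.neg l) := ⟨hnl, by rwa [S.neg_invol]⟩
      set P' : Set Lit := polar S P (PForm.lit (S.neg l)) with hP'
      have hnlP' : S.neg l ∈ P' := Set.mem_union_right _ ⟨rfl, hunpol⟩
      have hlP' : l ∉ P' := by
        rintro (h | ⟨h, -⟩)
        · exact hl h
        · exact S.neg_ne l (by injection h)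
      set Γ'' : Multiset (PForm V Lit) := PForm.lit (S.neg l) ::ₘ Γ' with hΓ''
      have hlmem'' : PForm.lit l ∈ Γ'' := Multiset.mem_cons_of_mem hlmem
      have hnlmem'' : PForm.lit (S.neg l) ∈ Γ'' := Multiset.mem_cons_self _ _
      -- select lit l (not P-negative since neg l ∉ P)
      refine ⟨4, DerNeg.select (A := PForm.lit l) hnl hnlmem ?_⟩
      -- release (lit l not P-positive since l ∉ P)
      refine DerPos.release (N := PForm.lit l) hl ?_
      -- store lit l
      have hstore : DerNeg S T Γ' P ({PForm.lit l} : Multiset (PForm V Lit)) 2 := by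
        have : ({PForm.lit l} : Multiset (PForm V Lit)) = PForm.lit l ::ₘ 0 := rfl
        rw [this]
        refine DerNeg.store (Or.inl ⟨l, rfl⟩) ?_
        -- now select lit (¬l) in context Γ'' with P'
        have hne : ¬ PForm.IsNeg S P' (PForm.lit (S.neg l)) := by
          simpa [PForm.IsNeg, S.neg_invol] using hlP'
        refine DerNeg.select (A := PForm.lit (S.neg l)) hne ?_ ?_
        · show PForm.lit (S.neg (S.neg l)) ∈ Γ''
          rw [S.neg_invol]; exact hlmem''
        · refine DerPos.init1 hnlP' ?_
          rw [S.neg_invol]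
          exact T_of_pair hT (Set.mem_union_right _ rfl)
            (Set.mem_union_left _ ⟨hnlP', hnlmem''⟩)
      exact hstore
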